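/- Let M = k^d for some k ∈ ℕ. Then for every real N ≥ 1 and every η > 0 one has f_N(η) ≤ f_{N/M}(η). -/

import Mathlib

open MeasureTheory Filter Set
open scoped ENNReal NNReal

noncomputable section

abbrev Rd (d : ℕ) := Fin d → ℝ

/-- `nrm` is a norm on `ℝ^d`. -/
def IsNorm {d : ℕ} (nrm : Rd d → ℝ) : Prop :=
  (∀ x, 0 ≤ nrm x) ∧ (∀ x, nrm x = 0 ↔ x = 0) ∧
  (∀ (c : ℝ) (x : Rd d), nrm (c • x) = |c| * nrm x) ∧
  (∀ x y, nrm (x + y) ≤ nrm x + nrm y)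

/-- The standing assumptions on `φ`: increasing, nonnegative, left continuous,
`lim_{t↓0} φ(t) = 0`, and not identically zero on `[0,∞)`. -/
def PhiOK (φ : ℝ → ℝ) : Prop :=
  MonotoneOn φ (Ici 0) ∧ (∀ t, 0 ≤ t → 0 ≤ φ t) ∧
  (∀ t, 0 < t → Tendsto φ (nhdsWithin t (Iio t)) (nhds (φ t))) ∧
  Tendsto φ (nhdsWithin 0 (Ioi 0)) (nhds 0) ∧
  (∃ t, 0 ≤ t ∧ φ t ≠ 0)

/-- distance from a point to a set, `d(x,A) = inf_{y ∈ A} ‖x - y‖`. -/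
def dSet {d : ℕ} (nrm : Rd d → ℝ) (x : Rd d) (A : Set (Rd d)) : ℝ :=
  sInf ((fun y => nrm (x - y)) '' A)

/-- the unit cube `[0,1)^d`. -/
def unitCube (d : ℕ) : Set (Rd d) := univ.pi fun _ => Ico (0:ℝ) 1

/-- `f_N(η) = inf_C E[φ((N/η)^{1/d} d(U,C))]`, infimum over nonempty codebooks of at most
`⌊N⌋` points, `U` uniform on `[0,1)^d`; it is `∞` for `N < 1` (empty infimum). -/
def fNq {d : ℕ} (nrm : Rd d → ℝ) (φ : ℝ → ℝ) (N η : ℝ) : ℝ≥0∞ :=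
  ⨅ (C : Finset (Rd d)) (_ : C.Nonempty) (_ : (C.card : ℝ) ≤ N),
    ∫⁻ x in unitCube d, ENNReal.ofReal (φ ((N / η) ^ (1 / (d:ℝ)) * dSet nrm x (C : Set (Rd d)))) ∂volume

/-- `g(η) = inf_{N ≥ 1} f_N(η)` for `η > 0`, extended by `g(0) = lim_{η↓0} g(η) = sup_{η>0} g(η)`
for `η ≤ 0`. -/
def gq {d : ℕ} (nrm : Rd d → ℝ) (φ : ℝ → ℝ) (η : ℝ) : ℝ≥0∞ :=
  if 0 < η then ⨅ N ∈ Ici (1:ℝ), fNq nrm φ N η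
  else ⨆ η' ∈ Ioi (0:ℝ), ⨅ N ∈ Ici (1:ℝ), fNq nrm φ N η'

/-- the absolutely continuous part `μ_c` of `μ` with respect to Lebesgue measure. -/
def muc {d : ℕ} (μ : Measure (Rd d)) : Measure (Rd d) :=
  volume.withDensity (μ.rnDeriv volume)

/-- Orlicz norm `‖F(X)‖_φ = inf{t > 0 : E[φ(F(X)/t)] ≤ 1}` (as the `sInf` in `ℝ≥0∞`,
so it is `∞` when no such `t` exists), where `X` has law `μ`. -/
def orliczN {d : ℕ} (φ : ℝ → ℝ) (μ : Measure (Rd d)) (F : Rd d → ℝ) : ℝ≥0∞ :=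
  sInf {s : ℝ≥0∞ | ∃ t : ℝ, 0 < t ∧ s = ENNReal.ofReal t ∧
    ∫⁻ x, ENNReal.ofReal (φ (F x / t)) ∂μ ≤ 1}

/-- the quantization error `δ(N|X,φ)`, where `X` has law `μ`. -/
def quantErr {d : ℕ} (nrm : Rd d → ℝ) (φ : ℝ → ℝ) (μ : Measure (Rd d)) (N : ℝ) : ℝ≥0∞ :=
  ⨅ (C : Finset (Rd d)) (_ : C.Nonempty) (_ : (C.card : ℝ) ≤ N),
    orliczN φ μ (fun x => dSet nrm x (C : Set (Rd d)))

/-- `I`, the value of the point allocation problem. -/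
def pav {d : ℕ} (nrm : Rd d → ℝ) (φ : ℝ → ℝ) (μ : Measure (Rd d)) : ℝ≥0∞ :=
  ⨅ (ξ : Rd d → ℝ) (_ : ∀ x, 0 ≤ ξ x) (_ : Integrable ξ volume)
    (_ : ∫⁻ x, gq nrm φ (ξ x) ∂(muc μ) ≤ 1),
    ENNReal.ofReal (∫ x, ξ x)

/-- `ḡ(a) = inf_{η>0} [g(η) + aη]`. -/
def gbarq {d : ℕ} (nrm : Rd d → ℝ) (φ : ℝ → ℝ) (a : ℝ≥0∞) : ℝ≥0∞ :=
  ⨅ η ∈ Ioi (0:ℝ), (gq nrm φ η + a * ENNReal.ofReal η)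


/-! Given a codebook `C` admissible for `N / k ^ d`, put a copy of `C` scaled by `1 / k` into each
of the `k ^ d` subcubes of side `1 / k`. The new codebook has at most `N` points, and on the subcube
`j / k + [0, 1 / k)^d` the distance to it is at most `1 / k` times the distance from `k x - j` to
`C`. Since `(N / η) ^ (1 / d) / k = (N / (k ^ d * η)) ^ (1 / d)`, a change of variables on each
subcube bounds the error of the new codebook at scale `N` by that of `C` at scale `N / k ^ d`. -/

section DistanceToSet

variable {d : ℕ} {nrm : Rd d → ℝ}

lemma dSet_nonneg (h0 : ∀ x, 0 ≤ nrm x) (x : Rd d) (A : Set (Rd d)) : 0 ≤ dSet nrm x A :=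
  Real.sInf_nonneg (by rintro _ ⟨y, -, rfl⟩; exact h0 _)

lemma dSet_le_of_mem (h0 : ∀ x, 0 ≤ nrm x) (x : Rd d) {A : Set (Rd d)} {y : Rd d}
    (hy : y ∈ A) : dSet nrm x A ≤ nrm (x - y) :=
  csInf_le ⟨0, by rintro _ ⟨w, -, rfl⟩; exact h0 _⟩ ⟨y, hy, rfl⟩

lemma exists_mem_dSet_eq {C : Finset (Rd d)} (hC : C.Nonempty) (x : Rd d) :
    ∃ c ∈ C, dSet nrm x C = nrm (x - c) := by
  obtain ⟨c, hc, h⟩ := (hC.to_set.image _).csInf_mem (C.finite_toSet.image fun y => nrm (x - y))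
  exact ⟨c, hc, h.symm⟩

end DistanceToSet

theorem setLIntegral_preimage_smul_sub {E : Type*} [NormedAddCommGroup E] [NormedSpace ℝ E]
    [MeasurableSpace E] [BorelSpace E] [FiniteDimensional ℝ E] (μ : Measure E)
    [μ.IsAddHaarMeasure] {c : ℝ} (hc : c ≠ 0) (v : E) (S : Set E) (G : E → ℝ≥0∞) :
    ∫⁻ x in (fun x => c • x - v) ⁻¹' S, G (c • x - v) ∂μ =
      ENNReal.ofReal |(c ^ Module.finrank ℝ E)⁻¹| * ∫⁻ y in S, G y ∂μ := by
  let e : E ≃ᵐ E :=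
    ((Homeomorph.smulOfNeZero c hc).trans (Homeomorph.subRight v)).toMeasurableEquiv
  have hmap : μ.map e = ENNReal.ofReal |(c ^ Module.finrank ℝ E)⁻¹| • μ := by
    change μ.map ((· - v) ∘ (c • ·)) = _
    rw [← Measure.map_map (measurable_sub_const v) (measurable_const_smul c),
      Measure.map_addHaar_smul μ hc, Measure.map_smul]
    simp_rw [sub_eq_add_neg, map_add_right_eq_self]
  rw [← smul_eq_mul, ← lintegral_smul_measure, ← Measure.restrict_smul, ← hmap, e.restrict_map,
    lintegral_map_equiv]
  rfl

section Grid

variable {d k : ℕ}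

def gridPoint (j : Fin d → Fin k) : Rd d := fun i => (j i : ℝ)

def subcube (k : ℕ) (j : Fin d → Fin k) : Set (Rd d) :=
  (fun x => (k : ℝ) • x - gridPoint j) ⁻¹' unitCube d

lemma unitCube_subset_iUnion_subcube (hk : 0 < k) : unitCube d ⊆ ⋃ j, subcube k j := by
  intro x hx
  simp only [unitCube, Set.mem_pi, mem_univ, true_implies, mem_Ico] at hx
  have hkx : ∀ i, 0 ≤ (k : ℝ) * x i := fun i => mul_nonneg k.cast_nonneg (hx i).1
  have hlt : ∀ i, ⌊(k : ℝ) * x i⌋₊ < k := fun i =>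
    (Nat.floor_lt (hkx i)).2 (by nlinarith [(hx i).2, (Nat.cast_pos.2 hk : (0 : ℝ) < k)])
  refine mem_iUnion.2 ⟨fun i => ⟨⌊(k : ℝ) * x i⌋₊, hlt i⟩, fun i _ => ?_⟩
  simp only [gridPoint, Pi.sub_apply, Pi.smul_apply, smul_eq_mul, mem_Ico, sub_nonneg,
    sub_lt_iff_lt_add']
  exact ⟨Nat.floor_le (hkx i), Nat.lt_floor_add_one _⟩

lemma setLIntegral_subcube_comp (hk : k ≠ 0) (j : Fin d → Fin k) (G : Rd d → ℝ≥0∞) :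
    ∫⁻ x in subcube k j, G ((k : ℝ) • x - gridPoint j) =
      ((k : ℝ≥0∞) ^ d)⁻¹ * ∫⁻ y in unitCube d, G y := by
  rw [subcube, setLIntegral_preimage_smul_sub volume (Nat.cast_ne_zero.2 hk), Module.finrank_fin_fun,
    abs_of_nonneg (by positivity), ENNReal.ofReal_inv_of_pos (by positivity), ENNReal.ofReal_pow
    k.cast_nonneg, ENNReal.ofReal_natCast]

lemma lintegral_unitCube_le_of_le_comp (hk : 0 < k) {F G : Rd d → ℝ≥0∞}
    (hFG : ∀ (j : Fin d → Fin k) x, F x ≤ G ((k : ℝ) • x - gridPoint j)) :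
    ∫⁻ x in unitCube d, F x ≤ ∫⁻ y in unitCube d, G y :=
  calc ∫⁻ x in unitCube d, F x
      ≤ ∫⁻ x in ⋃ j, subcube k j, F x := lintegral_mono_set (unitCube_subset_iUnion_subcube hk)
    _ ≤ ∑' j, ∫⁻ x in subcube k j, F x := lintegral_iUnion_le _ _
    _ ≤ ∑' j : Fin d → Fin k, ((k : ℝ≥0∞) ^ d)⁻¹ * ∫⁻ y in unitCube d, G y := by
        gcongr with j
        rw [← setLIntegral_subcube_comp hk.ne' j]
        exact lintegral_mono (hFG j)
    _ = ∫⁻ y in unitCube d, G y := by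
        rw [tsum_fintype, Finset.sum_const, Finset.card_univ, Fintype.card_fun, Fintype.card_fin,
          Fintype.card_fin, nsmul_eq_mul, ← mul_assoc, Nat.cast_pow,
          ENNReal.mul_inv_cancel (by positivity) (by simp), one_mul]

def gridCopies (k : ℕ) (C : Finset (Rd d)) : Finset (Rd d) :=
  (Finset.univ ×ˢ C).image fun p : (Fin d → Fin k) × Rd d => (k : ℝ)⁻¹ • (p.2 + gridPoint p.1)

lemma card_gridCopies_le (C : Finset (Rd d)) : (gridCopies k C).card ≤ k ^ d * C.card :=
  Finset.card_image_le.trans (by simp)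

lemma inv_smul_add_gridPoint_mem_gridCopies {C : Finset (Rd d)} {c : Rd d} (hc : c ∈ C)
    (j : Fin d → Fin k) : (k : ℝ)⁻¹ • (c + gridPoint j) ∈ gridCopies k C :=
  Finset.mem_image.2 ⟨(j, c), Finset.mem_product.2 ⟨Finset.mem_univ j, hc⟩, rfl⟩

lemma dSet_gridCopies_le {nrm : Rd d → ℝ} (h0 : ∀ x, 0 ≤ nrm x)
    (hhom : ∀ (c : ℝ) x, nrm (c • x) = |c| * nrm x) (hk : k ≠ 0) {C : Finset (Rd d)}
    (hC : C.Nonempty) (j : Fin d → Fin k) (x : Rd d) :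
    dSet nrm x (gridCopies k C) ≤ (k : ℝ)⁻¹ * dSet nrm ((k : ℝ) • x - gridPoint j) C := by
  obtain ⟨c, hc, hdist⟩ := exists_mem_dSet_eq (nrm := nrm) hC ((k : ℝ) • x - gridPoint j)
  have hk' : (k : ℝ) ≠ 0 := Nat.cast_ne_zero.2 hk
  have hsub : x - (k : ℝ)⁻¹ • (c + gridPoint j) = (k : ℝ)⁻¹ • ((k : ℝ) • x - gridPoint j - c) := by
    rw [smul_sub, smul_sub, inv_smul_smul₀ hk', smul_add]
    abel
  calc dSet nrm x (gridCopies k C)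
      ≤ nrm (x - (k : ℝ)⁻¹ • (c + gridPoint j)) :=
        dSet_le_of_mem h0 x (Finset.mem_coe.2 (inv_smul_add_gridPoint_mem_gridCopies hc j))
    _ = (k : ℝ)⁻¹ * dSet nrm ((k : ℝ) • x - gridPoint j) C := by
        rw [hsub, hhom, hdist, abs_of_nonneg (by positivity)]

end Grid

lemma div_pow_rpow_one_div {x : ℝ} (hx : 0 ≤ x) (k : ℕ) {d : ℕ} (hd : d ≠ 0) :
    (x / (k : ℝ) ^ d) ^ (1 / (d : ℝ)) = x ^ (1 / (d : ℝ)) / k := by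
  rw [Real.div_rpow hx (by positivity), one_div, Real.pow_rpow_inv_natCast (by positivity) hd]

/-- For `M = k^d`, `f_N(η) ≤ f_{N/M}(η)`. -/
theorem statement8 {d : ℕ} (hd : 0 < d)
    (nrm : Rd d → ℝ) (hnrm : IsNorm nrm) (φ : ℝ → ℝ) (hφ : PhiOK φ)
    (k : ℕ) (hk : 0 < k) (N η : ℝ) (hN : 1 ≤ N) (hη : 0 < η) :
    fNq nrm φ N η ≤ fNq nrm φ (N / (k:ℝ)^d) η := by
  obtain ⟨h0, -, hhom, -⟩ := hnrm
  refine le_iInf fun C => le_iInf fun hC => le_iInf fun hcard => ?_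
  have hcard' : ((gridCopies k C).card : ℝ) ≤ N :=
    calc ((gridCopies k C).card : ℝ) ≤ (k : ℝ) ^ d * C.card := by
          exact_mod_cast card_gridCopies_le C
      _ ≤ (k : ℝ) ^ d * (N / (k : ℝ) ^ d) := by gcongr
      _ = N := mul_div_cancel₀ N (by positivity)
  have hnonempty : (gridCopies k C).Nonempty :=
    ⟨_, inv_smul_add_gridPoint_mem_gridCopies hC.choose_spec fun _ => ⟨0, hk⟩⟩
  refine iInf_le_of_le _ (iInf_le_of_le hnonempty (iInf_le_of_le hcard' ?_))
  set r := (N / η) ^ (1 / (d : ℝ))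
  have hr : 0 ≤ r := by positivity
  have hscale : (N / (k : ℝ) ^ d / η) ^ (1 / (d : ℝ)) = r * (k : ℝ)⁻¹ := by
    rw [div_right_comm, div_pow_rpow_one_div (by positivity) k hd.ne', div_eq_mul_inv]
  refine lintegral_unitCube_le_of_le_comp hk fun j x => ENNReal.ofReal_le_ofReal (hφ.1 ?_ ?_ ?_)
  · exact mul_nonneg hr (dSet_nonneg h0 _ _)
  · rw [hscale]
    exact mul_nonneg (by positivity) (dSet_nonneg h0 _ _)
  · rw [hscale, mul_assoc]
    exact mul_le_mul_of_nonneg_left (dSet_gridCopies_le h0 hhom hk.ne' hC j x) hr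

end
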